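/- arXiv:1808.00045 — 2 statements merged into one kernel-verified Lean document; each statement's English description precedes it below -/
import Mathlib

section
/- Let q, r be coprime integers with 1 ≤ q ≤ r, let P ≥ 0, N = rP+1, and K ≥ 1. Then, as an identity of rational numbers, (K + (r−q)P) · Σ_{λ ⊢ N} ℓ(λ) · w(λ) · M(λ) · C(K, ℓ(λ)) = N · K · C(K + (r−q)P, N). Equivalently, the mean number of occupied states under the Haldane probability measure is ⟨ℓ⟩ = N·K / (K + (r−q)P) whenever C(K+(r−q)P, N) ≠ 0. -/
open Finset

/-- The Haldane weight `w(λ)` of a partition `λ` of `N`, for FES parameter `g = q/r`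
with excess `P = (N-1)/r`:
`w(λ) = [C(P, ℓ(λ) − k₁(λ)) / C(ℓ(λ), k₁(λ))] · ∏_{j=0}^{r−q} C(r−q, j)^{k_{j+1}(λ)}`
if the largest part of `λ` is at most `r − q + 1`, and `0` otherwise. -/
def haldaneWeight (q r P N : ℕ) (lam : Nat.Partition N) : ℚ :=
  if ∀ i ∈ lam.parts, i ≤ r - q + 1 then
    ((Nat.choose P (Multiset.card lam.parts - lam.parts.count 1) : ℚ) /
        (Nat.choose (Multiset.card lam.parts) (lam.parts.count 1) : ℚ)) *
      ∏ j ∈ Finset.range (r - q + 1),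
        ((Nat.choose (r - q) j : ℚ)) ^ (lam.parts.count (j + 1))
  else 0

/-- The multinomial factor `M(λ) = ℓ(λ)! / ∏_{i=1}^N kᵢ(λ)!` of a partition `λ` of `N`. -/
def multiFactor (N : ℕ) (lam : Nat.Partition N) : ℚ :=
  (Nat.factorial (Multiset.card lam.parts) : ℚ) /
    ∏ i ∈ Finset.Icc 1 N, (Nat.factorial (lam.parts.count i) : ℚ)


/-!
Write `s = r - q`, `e = (1 + X)^s - 1` and `g = X·e`, so that `[Xⁱ] g = C(s, i - 1)` for `i ≥ 2`
and `[X¹] g = 0`. Splitting off the `k = k₁(λ)` parts equal to one, `w(λ)·M(λ)` is `C(P, m)`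
times the multinomial term of the remaining `m` parts, weighted by `∏ [Xⁱ] g`; summed over
those parts this is `[X^(N-k)] g^m` by the multinomial theorem. Moreover `ℓ·C(K, ℓ) = [X^ℓ] A`
for `A = X·D(1 + X)^K`. As `g^m = X^m e^m` with `deg e^m ≤ sm`, and `(s + 1)P ≤ rP < N`
because `q ≥ 1`, the double sum over `k` and `m ≤ P` collapses to
`[X^N] A·Σ_m C(P, m) e^m = [X^N] A·(1 + X)^(sP) = K·C(K - 1 + sP, N - 1)`,
and `(K + sP)·K·C(K - 1 + sP, N - 1) = N·K·C(K + sP, N)`.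
-/

open Polynomial

namespace Multiset
variable {α : Type*} [DecidableEq α]

theorem filter_ne_add_replicate_count (S : Multiset α) (a : α) :
    S.filter (a ≠ ·) + replicate (S.count a) a = S := by
  rw [← filter_eq, add_comm]
  simpa [eq_comm] using filter_add_not (a = ·) S

theorem card_eq_count_add_card_filter_ne (S : Multiset α) (a : α) :
    card S = S.count a + card (S.filter (a ≠ ·)) := by
  conv_lhs => rw [← S.filter_ne_add_replicate_count a]
  rw [card_add, card_replicate, add_comm]

theorem prod_map_eq_prod_map_filter_ne {M : Type*} [CommMonoid M] {f g : α → M} {a : α}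
    (hfa : f a = 1) (hfg : ∀ i, i ≠ a → f i = g i) (S : Multiset α) :
    (S.map f).prod = ((S.filter (a ≠ ·)).map g).prod := by
  conv_lhs => rw [← S.filter_ne_add_replicate_count a]
  rw [map_add, prod_add, map_replicate, prod_replicate, hfa, one_pow, mul_one]
  exact congrArg prod (map_congr rfl fun i hi => hfg i (Ne.symm (of_mem_filter hi)))

end Multiset

def partitionMultisets (n : ℕ) : Finset (Multiset ℕ) :=
  (Finset.univ : Finset (Nat.Partition n)).map ⟨Nat.Partition.parts, fun _ _ => Nat.Partition.ext⟩

theorem mem_partitionMultisets {n : ℕ} {S : Multiset ℕ} :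
    S ∈ partitionMultisets n ↔ (∀ i ∈ S, 0 < i) ∧ S.sum = n := by
  simp only [partitionMultisets, Finset.mem_map, Finset.mem_univ, true_and]
  constructor
  · rintro ⟨p, rfl⟩
    exact ⟨fun i hi => p.parts_pos hi, p.parts_sum⟩
  · rintro ⟨hpos, hsum⟩
    exact ⟨⟨S, hpos _, hsum⟩, rfl⟩

theorem sum_partition_eq_sum_partitionMultisets {R : Type*} [AddCommMonoid R] (n : ℕ)
    (F : Multiset ℕ → R) :
    ∑ p : Nat.Partition n, F p.parts = ∑ S ∈ partitionMultisets n, F S := by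
  rw [partitionMultisets, Finset.sum_map]
  rfl

theorem card_le_of_mem_partitionMultisets {n : ℕ} {S : Multiset ℕ}
    (hS : S ∈ partitionMultisets n) : Multiset.card S ≤ n := by
  obtain ⟨hpos, rfl⟩ := mem_partitionMultisets.1 hS
  simpa using Multiset.card_nsmul_le_sum hpos

theorem filter_ne_one_mem_partitionMultisets {N : ℕ} {S : Multiset ℕ}
    (hS : S ∈ partitionMultisets N) : S.filter (1 ≠ ·) ∈ partitionMultisets (N - S.count 1) := by
  obtain ⟨hpos, rfl⟩ := mem_partitionMultisets.1 hS
  have hsplit := congrArg Multiset.sum (S.filter_ne_add_replicate_count 1)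
  rw [Multiset.sum_add, Multiset.sum_replicate, smul_eq_mul, mul_one] at hsplit
  exact mem_partitionMultisets.2 ⟨fun i hi => hpos i (Multiset.mem_of_mem_filter hi), by omega⟩

theorem add_replicate_one_mem_partitionMultisets {n : ℕ} {μ : Multiset ℕ}
    (hμ : μ ∈ partitionMultisets n) (k : ℕ) :
    μ + Multiset.replicate k 1 ∈ partitionMultisets (n + k) := by
  obtain ⟨hpos, rfl⟩ := mem_partitionMultisets.1 hμ
  refine mem_partitionMultisets.2 ⟨fun i hi => ?_, by simp⟩
  rcases Multiset.mem_add.1 hi with hi | hi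
  · exact hpos i hi
  · rw [Multiset.eq_of_mem_replicate hi]
    exact one_pos

theorem sum_partitionMultisets_split_count_one {R : Type*} [AddCommMonoid R]
    (F : ℕ → Multiset ℕ → R) (hF : ∀ k μ, 1 ∈ μ → F k μ = 0) (N : ℕ) :
    ∑ S ∈ partitionMultisets N, F (S.count 1) (S.filter (1 ≠ ·)) =
      ∑ k ∈ range (N + 1), ∑ μ ∈ partitionMultisets (N - k), F k μ := by
  rw [← Finset.sum_fiberwise_of_maps_to (g := Multiset.count 1) (t := range (N + 1))
    fun S hS => mem_range_succ_iff.2 <|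
      (Multiset.count_le_card 1 S).trans (card_le_of_mem_partitionMultisets hS)]
  refine Finset.sum_congr rfl fun k hk => ?_
  rw [← Finset.sum_filter_of_ne (p := (1 ∉ ·)) fun μ _ hμ h1 => hμ (hF k μ h1)]
  refine Finset.sum_nbij' (Multiset.filter (1 ≠ ·)) (· + Multiset.replicate k 1) ?_ ?_ ?_ ?_ ?_
  · intro S hS
    obtain ⟨hSN, rfl⟩ := Finset.mem_filter.1 hS
    exact Finset.mem_filter.2
      ⟨filter_ne_one_mem_partitionMultisets hSN, fun h => (Multiset.mem_filter.1 h).2 rfl⟩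
  · intro μ hμ
    obtain ⟨hμN, h1⟩ := Finset.mem_filter.1 hμ
    have hkN : N - k + k = N := Nat.sub_add_cancel (mem_range_succ_iff.1 hk)
    refine Finset.mem_filter.2 ⟨hkN ▸ add_replicate_one_mem_partitionMultisets hμN k, ?_⟩
    rw [Multiset.count_add, Multiset.count_replicate_self, Multiset.count_eq_zero.2 h1, zero_add]
  · intro S hS
    rw [← (Finset.mem_filter.1 hS).2]
    exact S.filter_ne_add_replicate_count 1
  · intro μ hμ
    have h1 := (Finset.mem_filter.1 hμ).2
    rw [Multiset.filter_add,
      Multiset.filter_eq_self.2 fun i hi => (ne_of_mem_of_not_mem hi h1).symm,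
      Multiset.filter_eq_nil.2 fun i hi h => h (Multiset.eq_of_mem_replicate hi).symm, add_zero]
  · intro S hS
    rw [(Finset.mem_filter.1 hS).2]

namespace Polynomial
variable {R : Type*} [CommSemiring R]

theorem multiset_prod_map_monomial (μ : Multiset ℕ) (a : ℕ → R) :
    (μ.map fun i => monomial i (a i)).prod = monomial μ.sum (μ.map a).prod := by
  induction μ using Multiset.induction_on with
  | empty => simp
  | cons i μ ih => simp [ih, monomial_mul_monomial]

theorem coeff_pow_eq_sum_partitionMultisets {f : R[X]} (hf : f.coeff 0 = 0) (m n : ℕ) :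
    (f ^ m).coeff n = ∑ S ∈ (partitionMultisets n).filter (Multiset.card · = m),
      (S.countPerms : R) * (S.map f.coeff).prod := by
  conv_lhs => rw [f.as_sum_support, Finset.sum_pow]
  simp only [multiset_prod_map_monomial, finsetSum_coeff, coeff_natCast_mul, coeff_monomial]
  have sum_eq_of_ne_zero {S : Multiset ℕ} {c : R}
      (h : c * (if S.sum = n then (S.map f.coeff).prod else 0) ≠ 0) : S.sum = n := by
    by_contra hS
    simp [hS] at h
  refine Finset.sum_bij_ne_zero (fun μ _ _ => (μ : Multiset ℕ)) ?_ ?_ ?_ ?_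
  · intro μ hμ hne
    refine Finset.mem_filter.2 ⟨mem_partitionMultisets.2 ⟨fun i hi => ?_, sum_eq_of_ne_zero hne⟩,
      μ.2⟩
    have hi : f.coeff i ≠ 0 := mem_support_iff.1 (Finset.mem_sym_iff.1 hμ i hi)
    exact Nat.pos_of_ne_zero fun h => hi (h ▸ hf)
  · intro μ _ _ ν _ _ h
    exact Sym.coe_injective h
  · intro S hS hne
    obtain ⟨hpart, hcard⟩ := Finset.mem_filter.1 hS
    have hsupp : ∀ i ∈ S, i ∈ f.support := fun i hi => mem_support_iff.2 fun h0 =>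
      hne (by rw [Multiset.prod_eq_zero (Multiset.mem_map.2 ⟨i, hi, h0⟩), mul_zero])
    refine ⟨⟨S, hcard⟩, Finset.mem_sym_iff.2 hsupp, ?_, rfl⟩
    rwa [if_pos (mem_partitionMultisets.1 hpart).2]
  · intro μ _ hne
    rw [if_pos (sum_eq_of_ne_zero hne)]
    rfl

theorem sum_partitionMultisets_eq_sum_coeff_pow {f : R[X]} (hf : f.coeff 0 = 0) (c : ℕ → R)
    {n M : ℕ} (hn : n < M) :
    ∑ S ∈ partitionMultisets n, c (Multiset.card S) * (S.countPerms * (S.map f.coeff).prod) =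
      ∑ m ∈ range M, c m * (f ^ m).coeff n := by
  rw [← Finset.sum_fiberwise_of_maps_to (g := Multiset.card) (t := range M)
    fun S hS => mem_range.2 ((card_le_of_mem_partitionMultisets hS).trans_lt hn)]
  refine Finset.sum_congr rfl fun m _ => ?_
  rw [coeff_pow_eq_sum_partitionMultisets hf, Finset.mul_sum]
  refine Finset.sum_congr rfl fun S hS => ?_
  rw [(Finset.mem_filter.1 hS).2]

theorem sum_coeff_add_mul_coeff_X_mul_pow (A e : R[X]) {m N : ℕ}
    (h : (e ^ m).natDegree + m ≤ N) :
    ∑ k ∈ range (N + 1), A.coeff (k + m) * ((X * e) ^ m).coeff (N - k) =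
      (A * e ^ m).coeff N := by
  have hlow : ∀ j < m, ((X * e) ^ m).coeff (N + m - j) = 0 := by
    intro j hj
    rw [mul_pow, coeff_X_pow_mul', if_pos (by omega)]
    exact coeff_eq_zero_of_natDegree_lt (by omega)
  rw [← coeff_mul_X_pow, show A * e ^ m * X ^ m = A * (X * e) ^ m by ring, coeff_mul,
    Finset.Nat.sum_antidiagonal_eq_sum_range_succ_mk, show (N + m).succ = m + (N + 1) by omega,
    Finset.sum_range_add _ m (N + 1), Finset.sum_eq_zero (s := range m) fun j hj => by
      rw [hlow j (mem_range.1 hj), mul_zero], zero_add]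
  refine Finset.sum_congr rfl fun k _ => ?_
  rw [add_comm k m, show N + m - (m + k) = N - k by omega]

theorem coeff_mul_add_one_pow_eq_sum_coeff_X_mul_pow (A e : R[X]) {s P N : ℕ}
    (he : e.natDegree ≤ s) (hdeg : (s + 1) * P ≤ N) :
    (A * (e + 1) ^ P).coeff N = ∑ k ∈ range (N + 1), ∑ m ∈ range (N + 1),
      A.coeff (k + m) * P.choose m * ((X * e) ^ m).coeff (N - k) := by
  have hPN : P < N + 1 := Nat.lt_succ_of_le ((Nat.le_mul_of_pos_left P s.succ_pos).trans hdeg)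
  rw [Finset.sum_comm, add_pow, Finset.mul_sum, finsetSum_coeff,
    ← Finset.sum_subset (Finset.range_subset_range.2 hPN) fun m _ hm => by
      rw [Nat.choose_eq_zero_of_lt (by simpa using hm)]; simp]
  refine Finset.sum_congr rfl fun m hm => ?_
  have hdeg_m : (e ^ m).natDegree + m ≤ N := by
    have := (natDegree_pow_le (p := e) (n := m)).trans (Nat.mul_le_mul_left m he)
    have := Nat.lt_succ_iff.1 (mem_range.1 hm)
    nlinarith
  rw [one_pow, mul_one, ← mul_assoc, coeff_mul_natCast,
    ← sum_coeff_add_mul_coeff_X_mul_pow A e hdeg_m, Finset.sum_mul]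
  exact Finset.sum_congr rfl fun k _ => by ring

theorem coeff_X_mul_derivative (p : R[X]) (n : ℕ) :
    (X * derivative p).coeff n = n * p.coeff n := by
  cases n with
  | zero => simp
  | succ n => rw [coeff_X_mul, coeff_derivative, mul_comm]; push_cast; rfl

theorem coeff_X_mul_X_add_one_pow_succ (s j : ℕ) :
    (X * (X + 1) ^ s : R[X]).coeff (j + 1) = s.choose j := by
  rw [coeff_X_mul, coeff_X_add_one_pow]

theorem coeff_X_mul_derivative_X_add_one_pow_mul_X_add_one_pow (K t n : ℕ) :
    (X * derivative ((X + 1) ^ K) * (X + 1) ^ t : R[X]).coeff (n + 1) =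
      K * (K - 1 + t).choose n := by
  rw [mul_assoc, coeff_X_mul, derivative_pow, derivative_add, derivative_X, derivative_one,
    add_zero, mul_one, mul_assoc, ← pow_add, coeff_C_mul, coeff_X_add_one_pow]

end Polynomial

theorem Nat.add_mul_mul_choose_sub_one (K t n : ℕ) :
    (K + t) * (K * (K - 1 + t).choose n) = (n + 1) * K * (K + t).choose (n + 1) := by
  rcases K with _ | K
  · simp
  · rw [show K + 1 - 1 + t = K + t by omega, show K + 1 + t = K + t + 1 by omega]
    linear_combination (K + 1) * Nat.add_one_mul_choose_eq (K + t) n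

theorem haldaneWeight_eq (q r P N : ℕ) (lam : Nat.Partition N) :
    haldaneWeight q r P N lam =
      (P.choose (Multiset.card lam.parts - lam.parts.count 1) : ℚ) /
          (Multiset.card lam.parts).choose (lam.parts.count 1) *
        (lam.parts.map (X * (X + 1) ^ (r - q) : ℚ[X]).coeff).prod := by
  rw [haldaneWeight]
  split_ifs with hle
  · congr 1
    symm
    have hsub : lam.parts.toFinset ⊆ range (r - q + 1 + 1) := fun i hi =>
      mem_range_succ_iff.2 (hle i (Multiset.mem_toFinset.1 hi))
    rw [Finset.prod_multiset_map_count, Finset.prod_subset hsub fun i _ hi => by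
        rw [Multiset.count_eq_zero.2 fun h => hi (Multiset.mem_toFinset.2 h), pow_zero],
      Finset.prod_range_succ', Multiset.count_eq_zero.2 fun h => (lam.parts_pos h).false,
      pow_zero, mul_one]
    simp only [coeff_X_mul_X_add_one_pow_succ]
  · push Not at hle
    obtain ⟨i, hi, hlt⟩ := hle
    obtain ⟨j, rfl⟩ : ∃ j, i = j + 1 := ⟨i - 1, by omega⟩
    have hzero : (X * (X + 1) ^ (r - q) : ℚ[X]).coeff (j + 1) = 0 := by
      rw [coeff_X_mul_X_add_one_pow_succ, Nat.choose_eq_zero_of_lt (by omega), Nat.cast_zero]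
    rw [Multiset.prod_eq_zero (Multiset.mem_map.2 ⟨j + 1, hi, hzero⟩), mul_zero]

theorem multiFactor_eq_countPerms (N : ℕ) (lam : Nat.Partition N) :
    multiFactor N lam = lam.parts.countPerms := by
  have hsub : lam.parts.toFinset ⊆ Icc 1 N := fun i hi =>
    have hi := Multiset.mem_toFinset.1 hi
    mem_Icc.2 ⟨lam.parts_pos hi, lam.le_of_mem_parts hi⟩
  have hspec := Nat.multinomial_spec (Icc 1 N) lam.parts.count
  rw [Multiset.sum_count_eq_card fun i hi => hsub (Multiset.mem_toFinset.2 hi)] at hspec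
  rw [multiFactor, Multiset.countPerms, Finsupp.multinomial_eq_of_support_subset hsub,
    div_eq_iff (Finset.prod_ne_zero_iff.2 fun i _ => by positivity)]
  exact_mod_cast ((mul_comm _ _).trans hspec).symm

theorem card_mul_haldaneWeight_mul_multiFactor_mul_choose (q r P K N : ℕ)
    (lam : Nat.Partition N) :
    (Multiset.card lam.parts : ℚ) * haldaneWeight q r P N lam * multiFactor N lam *
        (K.choose (Multiset.card lam.parts) : ℚ) =
      (X * derivative ((X + 1) ^ K) : ℚ[X]).coeff
          (lam.parts.count 1 + Multiset.card (lam.parts.filter (1 ≠ ·))) *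
        P.choose (Multiset.card (lam.parts.filter (1 ≠ ·))) *
        ((lam.parts.filter (1 ≠ ·)).countPerms *
          ((lam.parts.filter (1 ≠ ·)).map (X * ((X + 1) ^ (r - q) - 1) : ℚ[X]).coeff).prod) := by
  have hcard := lam.parts.card_eq_count_add_card_filter_ne 1
  have hprod := Multiset.prod_map_eq_prod_map_filter_ne
    (f := (X * (X + 1) ^ (r - q) : ℚ[X]).coeff) (g := (X * ((X + 1) ^ (r - q) - 1) : ℚ[X]).coeff)
    (a := 1)
    (by simpa using coeff_X_mul_X_add_one_pow_succ (R := ℚ) (r - q) 0)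
    (fun i hi => by rw [mul_sub, mul_one, coeff_sub, coeff_X, if_neg (Ne.symm hi), sub_zero])
    lam.parts
  have hchoose : ((Multiset.card lam.parts).choose (lam.parts.count 1) : ℚ) ≠ 0 :=
    Nat.cast_ne_zero.2 (Nat.choose_pos (Multiset.count_le_card 1 lam.parts)).ne'
  rw [haldaneWeight_eq, multiFactor_eq_countPerms, Multiset.countPerms_filter_ne 1,
    coeff_X_mul_derivative, coeff_X_add_one_pow, hprod, ← hcard,
    show Multiset.card lam.parts - lam.parts.count 1 =
      Multiset.card (lam.parts.filter (1 ≠ ·)) by omega]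
  push_cast
  field_simp

theorem sum_card_mul_haldaneWeight_eq_coeff (q r P K N : ℕ) (hdeg : (r - q + 1) * P ≤ N) :
    ∑ lam : Nat.Partition N,
        (Multiset.card lam.parts : ℚ) * haldaneWeight q r P N lam * multiFactor N lam *
          (K.choose (Multiset.card lam.parts) : ℚ) =
      (X * derivative ((X + 1) ^ K) * (X + 1) ^ ((r - q) * P) : ℚ[X]).coeff N := by
  set e : ℚ[X] := (X + 1) ^ (r - q) - 1 with he_def
  have he : e.natDegree ≤ r - q := by rw [he_def]; compute_degree!
  have hg1 : (X * e).coeff 1 = 0 := by simp [e, coeff_X_add_one_pow]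
  set A : ℚ[X] := X * derivative ((X + 1) ^ K)
  calc _ = ∑ S ∈ partitionMultisets N, A.coeff (S.count 1 + Multiset.card (S.filter (1 ≠ ·))) *
          P.choose (Multiset.card (S.filter (1 ≠ ·))) * ((S.filter (1 ≠ ·)).countPerms *
            ((S.filter (1 ≠ ·)).map (X * e).coeff).prod) := by
        rw [← sum_partition_eq_sum_partitionMultisets]
        exact Finset.sum_congr rfl fun lam _ =>
          card_mul_haldaneWeight_mul_multiFactor_mul_choose q r P K N lam
    _ = ∑ k ∈ range (N + 1), ∑ μ ∈ partitionMultisets (N - k), A.coeff (k + Multiset.card μ) *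
          P.choose (Multiset.card μ) * (μ.countPerms * (μ.map (X * e).coeff).prod) := by
        refine sum_partitionMultisets_split_count_one
          (fun k μ => A.coeff (k + Multiset.card μ) * P.choose (Multiset.card μ) *
            (μ.countPerms * (μ.map (X * e).coeff).prod)) (fun k μ h1 => ?_) N
        rw [Multiset.prod_eq_zero (Multiset.mem_map.2 ⟨1, h1, hg1⟩), mul_zero, mul_zero]
    _ = ∑ k ∈ range (N + 1), ∑ m ∈ range (N + 1),
          A.coeff (k + m) * P.choose m * ((X * e) ^ m).coeff (N - k) :=
        Finset.sum_congr rfl fun k _ => sum_partitionMultisets_eq_sum_coeff_pow (by simp)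
          (fun m => A.coeff (k + m) * P.choose m) (by omega)
    _ = (A * (X + 1 : ℚ[X]) ^ ((r - q) * P)).coeff N := by
        rw [← coeff_mul_add_one_pow_eq_sum_coeff_X_mul_pow A e he hdeg, pow_mul, he_def,
          sub_add_cancel]

theorem stmt3_general (q r P K N : ℕ) (hq : 1 ≤ q) (hqr : q ≤ r) (hN : N = r * P + 1) :
    ((K : ℚ) + ((r - q) * P : ℕ)) *
        ∑ lam : Nat.Partition N,
          (Multiset.card lam.parts : ℚ) * haldaneWeight q r P N lam * multiFactor N lam *
            (Nat.choose K (Multiset.card lam.parts) : ℚ) =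
      (N : ℚ) * (K : ℚ) * (Nat.choose (K + (r - q) * P) N : ℚ) := by
  have hdeg : (r - q + 1) * P ≤ N := by
    rw [hN]
    exact (Nat.mul_le_mul_right P (by omega : r - q + 1 ≤ r)).trans (Nat.le_succ _)
  rw [sum_card_mul_haldaneWeight_eq_coeff q r P K N hdeg, hN,
    Polynomial.coeff_X_mul_derivative_X_add_one_pow_mul_X_add_one_pow]
  exact_mod_cast Nat.add_mul_mul_choose_sub_one K ((r - q) * P) (r * P)

/-- For coprime `q ≤ r`, `N = rP + 1` and `K ≥ 1`, as rational numbers: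
`(K + (r−q)P) · Σ_{λ ⊢ N} ℓ(λ)·w(λ)·M(λ)·C(K, ℓ(λ)) = N·K·C(K + (r−q)P, N)`;
i.e. the Haldane-measure mean number of occupied states is `N·K / (K + (r−q)P)`. -/
theorem stmt3 (q r P K N : ℕ) (hq : 1 ≤ q) (hqr : q ≤ r) (hcop : Nat.Coprime q r)
    (hK : 1 ≤ K) (hN : N = r * P + 1) :
    ((K : ℚ) + ((r - q) * P : ℕ)) *
        ∑ lam : Nat.Partition N,
          (Multiset.card lam.parts : ℚ) * haldaneWeight q r P N lam * multiFactor N lam *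
            (Nat.choose K (Multiset.card lam.parts) : ℚ) =
      (N : ℚ) * (K : ℚ) * (Nat.choose (K + (r - q) * P) N : ℚ) :=
  stmt3_general q r P K N hq hqr hN
end

section
/- Let q, r be coprime integers with 1 ≤ q ≤ r and let ρ be a real number with 0 < ρ < 1/q. For all sequences of positive integers (K_n), (P_n) with K_n → ∞ and P_n/K_n → ρ, setting N_n = rP_n + 1, the normalized mean number of occupied states under the Haldane probability measure with parameters (K_n, N_n) converges: (1/K_n) · Σ_{λ ⊢ N_n} ℓ(λ) ℙ_n(λ) → rρ / (1 + (r−q)ρ). -/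
open Finset

/-- The Haldane probability of a partition `λ` of `N`:
`ℙ(λ) = w(λ)·M(λ)·C(K, ℓ(λ)) / C(K+(r−q)P, N)`. -/
def haldaneProb (q r P K N : ℕ) (lam : Nat.Partition N) : ℚ :=
  haldaneWeight q r P N lam * multiFactor N lam *
      (Nat.choose K (Multiset.card lam.parts) : ℚ) /
    (Nat.choose (K + (r - q) * P) N : ℚ)

/-!
Encode a partition `λ` of `N = rP + 1` with parts at most `s + 1` (`s = r - q`) and at most `P`
parts `≥ 2`, which are exactly the partitions of nonzero Haldane weight, by the vector `k` with
`k_j` the number of parts equal to `j + 1` for `1 ≤ j ≤ s` and `k_0 = P - #{parts ≥ 2}`; the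
number of ones is then forced. For such `λ`, `w(λ) M(λ)` collapses to the multinomial coefficient
`(P; k_0, …, k_s) ∏ C(s, j)^{k_j}`, the coefficient attached to `k` in the expansion of
`((1 + X)^s)^P`, while `ℓ C(K, ℓ) = K C(K - 1, ℓ - 1)` with `ℓ - 1 = rP - Σ j k_j`. Hence
`Σ_λ ℓ w M C(K, ℓ) = K [X^{rP}] ((1 + X)^s)^P (1 + X)^{K-1} = K C(sP + K - 1, rP)`,
and the mean number of occupied states is exactly `K (rP + 1) / (K + sP)` once `K > qP`.
Since `ρ < 1/q` this holds eventually, and divided by `K` it tends to `rρ / (1 + sρ)`.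
-/

open Polynomial in
theorem sum_piAntidiag_multinomial_mul_choose (s P L n : ℕ) (h : s * P ≤ n) :
    ∑ k ∈ piAntidiag (range (s + 1)) P,
      Nat.multinomial (range (s + 1)) k * (∏ j ∈ range (s + 1), s.choose j ^ k j) *
        L.choose (n - ∑ j ∈ range (s + 1), j * k j) =
      (s * P + L).choose n := by
  have hexpand : ((X + 1 : ℕ[X]) ^ s) ^ P * (X + 1) ^ L =
      ∑ k ∈ piAntidiag (range (s + 1)) P,
        C (Nat.multinomial (range (s + 1)) k * ∏ j ∈ range (s + 1), s.choose j ^ k j) *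
          (X ^ (∑ j ∈ range (s + 1), j * k j) * (X + 1) ^ L) := by
    rw [add_pow, sum_pow_eq_sum_piAntidiag, sum_mul]
    refine sum_congr rfl fun k _ => ?_
    simp only [one_pow, mul_one, mul_pow, prod_mul_distrib, ← pow_mul, prod_pow_eq_pow_sum,
      map_mul, map_prod, map_pow, ← C_eq_natCast, Nat.cast_id]
    ring
  have hcoeff := congrArg (coeff · n) hexpand
  simp only [← pow_mul, ← pow_add, coeff_X_add_one_pow, finsetSum_coeff, coeff_C_mul,
    coeff_X_pow_mul', Nat.cast_id] at hcoeff
  rw [hcoeff]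
  refine sum_congr rfl fun k hk => ?_
  rw [if_pos]
  calc ∑ j ∈ range (s + 1), j * k j
      ≤ ∑ j ∈ range (s + 1), s * k j :=
        sum_le_sum fun j hj => Nat.mul_le_mul_right _ (Nat.lt_succ_iff.mp (mem_range.mp hj))
    _ = s * P := by rw [← mul_sum, (mem_piAntidiag.mp hk).1]
    _ ≤ n := h

lemma Finset.range_add_one_eq_insert_Icc (s : ℕ) : range (s + 1) = insert 0 (Icc 1 s) := by
  ext j; simp only [mem_range, mem_insert, mem_Icc]; omega

lemma mul_choose_eq_mul_choose_pred {L l : ℕ} (hl : 0 < l) :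
    l * (L + 1).choose l = (L + 1) * L.choose (l - 1) := by
  obtain ⟨l, rfl⟩ := Nat.exists_eq_add_of_lt hl
  rw [zero_add, Nat.add_sub_cancel, Nat.add_one_mul_choose_eq, mul_comm]

section Multiplicities

variable {s : ℕ} {μ : Multiset ℕ}

lemma mem_map_range_succ_of_mem (h : ∀ a ∈ μ, a ∈ Icc 1 (s + 1)) {a : ℕ} (ha : a ∈ μ) :
    a ∈ (range (s + 1)).map (addRightEmbedding 1) := by
  have := mem_Icc.mp (h a ha)
  simp only [mem_map, mem_range, addRightEmbedding_apply]
  exact ⟨a - 1, by omega, by omega⟩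

lemma card_eq_sum_range_count_succ (h : ∀ a ∈ μ, a ∈ Icc 1 (s + 1)) :
    Multiset.card μ = ∑ j ∈ range (s + 1), μ.count (j + 1) := by
  rw [← Multiset.sum_count_eq_card fun a ha => mem_map_range_succ_of_mem h ha, sum_map]
  rfl

lemma card_eq_count_one_add_sum_Icc (h : ∀ a ∈ μ, a ∈ Icc 1 (s + 1)) :
    Multiset.card μ = μ.count 1 + ∑ j ∈ Icc 1 s, μ.count (j + 1) := by
  rw [card_eq_sum_range_count_succ h, range_add_one_eq_insert_Icc, sum_insert (by simp)]

lemma sum_eq_sum_range_mul_count_succ (h : ∀ a ∈ μ, a ∈ Icc 1 (s + 1)) :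
    μ.sum = ∑ j ∈ range (s + 1), (j + 1) * μ.count (j + 1) := by
  rw [sum_multiset_count_of_subset μ _ fun a ha =>
    mem_map_range_succ_of_mem h (Multiset.mem_toFinset.mp ha), sum_map]
  exact sum_congr rfl fun j _ => mul_comm _ _

lemma sum_eq_card_add_sum_range_mul_count_succ (h : ∀ a ∈ μ, a ∈ Icc 1 (s + 1)) :
    μ.sum = Multiset.card μ + ∑ j ∈ range (s + 1), j * μ.count (j + 1) := by
  simp only [sum_eq_sum_range_mul_count_succ h, card_eq_sum_range_count_succ h, ← sum_add_distrib]
  exact sum_congr rfl fun j _ => by ring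

lemma prod_Icc_factorial_count_eq (h : ∀ a ∈ μ, a ∈ Icc 1 (s + 1)) {N : ℕ}
    (hN : μ.sum = N) :
    ∏ i ∈ Icc 1 N, (μ.count i).factorial =
      ∏ j ∈ range (s + 1), (μ.count (j + 1)).factorial := by
  have hsupp : ∀ A : Finset ℕ, μ.toFinset ⊆ A →
      ∏ a ∈ A, (μ.count a).factorial = ∏ a ∈ μ.toFinset, (μ.count a).factorial :=
    fun A hA => (prod_subset hA fun a _ ha => by
      rw [Multiset.count_eq_zero_of_notMem (Multiset.mem_toFinset.not.mp ha),
        Nat.factorial_zero]).symm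
  rw [hsupp _ fun a ha => ?_,
    ← hsupp _ fun a ha => mem_map_range_succ_of_mem h (Multiset.mem_toFinset.mp ha), prod_map]
  · rfl
  have ha := Multiset.mem_toFinset.mp ha
  exact mem_Icc.mpr ⟨(mem_Icc.mp (h a ha)).1, hN ▸ Multiset.le_sum_of_mem ha⟩

lemma eq_of_count_succ_eq {ν : Multiset ℕ} (hμ : ∀ a ∈ μ, a ∈ Icc 1 (s + 1))
    (hν : ∀ a ∈ ν, a ∈ Icc 1 (s + 1))
    (hc : ∀ j ∈ range (s + 1), μ.count (j + 1) = ν.count (j + 1)) : μ = ν := by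
  ext a
  by_cases ha : a ∈ Icc 1 (s + 1)
  · have := mem_Icc.mp ha
    simpa [show a - 1 + 1 = a by omega] using hc (a - 1) (mem_range.mpr (by omega))
  · rw [Multiset.count_eq_zero_of_notMem fun h => ha (hμ a h),
      Multiset.count_eq_zero_of_notMem fun h => ha (hν a h)]

end Multiplicities

section ExponentProfile

variable {s P N : ℕ}

def IsHaldaneAdmissible (s P : ℕ) (μ : Multiset ℕ) : Prop :=
  (∀ a ∈ μ, a ∈ Icc 1 (s + 1)) ∧ Multiset.card μ - μ.count 1 ≤ P

def exponentProfile (P : ℕ) (μ : Multiset ℕ) (j : ℕ) : ℕ :=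
  if j = 0 then P - (Multiset.card μ - μ.count 1) else μ.count (j + 1)

def profileMultiset (s N : ℕ) (k : ℕ → ℕ) : Multiset ℕ :=
  Multiset.replicate (N - ∑ j ∈ Icc 1 s, (j + 1) * k j) 1 +
    ∑ j ∈ Icc 1 s, Multiset.replicate (k j) (j + 1)

def partitionOfProfile (s N : ℕ) (k : ℕ → ℕ) : N.Partition :=
  if h : (profileMultiset s N k).sum = N then .ofSums N _ h else default

lemma exponentProfile_of_mem_Icc {μ : Multiset ℕ} {j : ℕ} (hj : j ∈ Icc 1 s) :
    exponentProfile P μ j = μ.count (j + 1) :=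
  if_neg (by have := (mem_Icc.mp hj).1; omega)

lemma add_sum_Icc_of_mem_piAntidiag {k : ℕ → ℕ} (hk : k ∈ piAntidiag (range (s + 1)) P) :
    k 0 + ∑ j ∈ Icc 1 s, k j = P := by
  rw [← sum_insert (by simp), ← range_add_one_eq_insert_Icc, (mem_piAntidiag.mp hk).1]

lemma mem_profileMultiset {k : ℕ → ℕ} {a : ℕ} (ha : a ∈ profileMultiset s N k) :
    a ∈ Icc 1 (s + 1) := by
  simp only [profileMultiset, Multiset.mem_add, Multiset.mem_sum, Multiset.mem_replicate] at ha
  rcases ha with ⟨-, rfl⟩ | ⟨j, hj, -, rfl⟩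
  · simp
  · have := mem_Icc.mp hj
    exact mem_Icc.mpr ⟨by omega, by omega⟩

lemma count_profileMultiset_one (k : ℕ → ℕ) :
    (profileMultiset s N k).count 1 = N - ∑ j ∈ Icc 1 s, (j + 1) * k j := by
  simp only [profileMultiset, Multiset.count_add, Multiset.count_replicate_self,
    Multiset.count_sum', Multiset.count_replicate]
  rw [sum_eq_zero fun j hj => if_neg (by have := (mem_Icc.mp hj).1; omega), add_zero]

lemma count_profileMultiset_succ (k : ℕ → ℕ) {j : ℕ} (hj : j ∈ Icc 1 s) :
    (profileMultiset s N k).count (j + 1) = k j := by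
  simp only [profileMultiset, Multiset.count_add, Multiset.count_sum', Multiset.count_replicate]
  rw [if_neg (by have := (mem_Icc.mp hj).1; omega), zero_add,
    sum_eq_single_of_mem j hj fun i _ hij => if_neg (by omega), if_pos rfl]

lemma card_profileMultiset_sub_count_one (k : ℕ → ℕ) :
    Multiset.card (profileMultiset s N k) - (profileMultiset s N k).count 1 =
      ∑ j ∈ Icc 1 s, k j := by
  rw [card_eq_count_one_add_sum_Icc fun a => mem_profileMultiset,
    sum_congr rfl fun j hj => count_profileMultiset_succ k hj]
  omega

lemma sum_profileMultiset {k : ℕ → ℕ} (hk : k ∈ piAntidiag (range (s + 1)) P)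
    (hN : (s + 1) * P ≤ N) : (profileMultiset s N k).sum = N := by
  have hT : ∑ j ∈ Icc 1 s, (j + 1) * k j ≤ (s + 1) * P := calc
    _ ≤ ∑ j ∈ Icc 1 s, (s + 1) * k j :=
      sum_le_sum fun j hj => Nat.mul_le_mul_right _ (by have := (mem_Icc.mp hj).2; omega)
    _ ≤ (s + 1) * P := by
      rw [← mul_sum, ← add_sum_Icc_of_mem_piAntidiag hk]
      exact Nat.mul_le_mul_left _ (by omega)
  rw [sum_eq_sum_range_mul_count_succ fun a => mem_profileMultiset, range_add_one_eq_insert_Icc,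
    sum_insert (by simp), sum_congr rfl fun j hj => by rw [count_profileMultiset_succ k hj],
    count_profileMultiset_one]
  omega

lemma parts_partitionOfProfile {k : ℕ → ℕ} (h : (profileMultiset s N k).sum = N) :
    (partitionOfProfile s N k).parts = profileMultiset s N k := by
  rw [partitionOfProfile, dif_pos h]
  exact Multiset.filter_eq_self.mpr fun a ha => by
    have := mem_Icc.mp (mem_profileMultiset ha); omega

lemma isHaldaneAdmissible_partitionOfProfile {k : ℕ → ℕ}
    (hk : k ∈ piAntidiag (range (s + 1)) P) (hN : (s + 1) * P ≤ N) :
    IsHaldaneAdmissible s P (partitionOfProfile s N k).parts := by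
  rw [parts_partitionOfProfile (sum_profileMultiset hk hN)]
  have := add_sum_Icc_of_mem_piAntidiag hk
  exact ⟨fun a => mem_profileMultiset, by rw [card_profileMultiset_sub_count_one]; omega⟩

lemma exponentProfile_mem_piAntidiag {μ : Multiset ℕ} (h : IsHaldaneAdmissible s P μ) :
    exponentProfile P μ ∈ piAntidiag (range (s + 1)) P := by
  obtain ⟨hparts, hm⟩ := h
  refine mem_piAntidiag.mpr ⟨?_, fun j hj => ?_⟩
  · have hcard := card_eq_count_one_add_sum_Icc hparts
    rw [range_add_one_eq_insert_Icc, sum_insert (by simp),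
      sum_congr rfl fun j hj => exponentProfile_of_mem_Icc hj, exponentProfile, if_pos rfl]
    omega
  · refine mem_range.mpr (Nat.lt_of_not_le fun hjs => hj ?_)
    rw [exponentProfile, if_neg (by omega)]
    exact Multiset.count_eq_zero_of_notMem fun ha => by
      have := mem_Icc.mp (hparts _ ha); omega

lemma exponentProfile_partitionOfProfile {k : ℕ → ℕ} (hk : k ∈ piAntidiag (range (s + 1)) P)
    (hN : (s + 1) * P ≤ N) : exponentProfile P (partitionOfProfile s N k).parts = k := by
  rw [parts_partitionOfProfile (sum_profileMultiset hk hN)]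
  funext j
  rcases Nat.eq_zero_or_pos j with rfl | hj0
  · have hP := add_sum_Icc_of_mem_piAntidiag hk
    rw [exponentProfile, if_pos rfl, card_profileMultiset_sub_count_one]
    omega
  rw [exponentProfile, if_neg hj0.ne']
  by_cases hjs : j ≤ s
  · exact count_profileMultiset_succ k (mem_Icc.mpr ⟨hj0, hjs⟩)
  · rw [Multiset.count_eq_zero_of_notMem fun h => by
      have := mem_Icc.mp (mem_profileMultiset h); omega]
    by_contra hne
    have := mem_range.mp ((mem_piAntidiag.mp hk).2 j (Ne.symm hne))
    omega

lemma profileMultiset_exponentProfile {μ : Multiset ℕ} (h : ∀ a ∈ μ, a ∈ Icc 1 (s + 1))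
    (hN : μ.sum = N) : profileMultiset s N (exponentProfile P μ) = μ := by
  refine eq_of_count_succ_eq (fun a => mem_profileMultiset) h fun j hj => ?_
  rw [range_add_one_eq_insert_Icc, mem_insert] at hj
  rcases hj with rfl | hj
  · have hk : ∑ j ∈ Icc 1 s, (j + 1) * exponentProfile P μ j =
        ∑ j ∈ Icc 1 s, (j + 1) * μ.count (j + 1) :=
      sum_congr rfl fun j hj => by rw [exponentProfile_of_mem_Icc hj]
    rw [count_profileMultiset_one, hk, ← hN, sum_eq_sum_range_mul_count_succ h,
      range_add_one_eq_insert_Icc, sum_insert (by simp)]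
    omega
  · rw [count_profileMultiset_succ _ hj, exponentProfile_of_mem_Icc hj]

lemma partitionOfProfile_exponentProfile (lam : N.Partition)
    (h : ∀ a ∈ lam.parts, a ∈ Icc 1 (s + 1)) :
    partitionOfProfile s N (exponentProfile P lam.parts) = lam := by
  have hprofile := profileMultiset_exponentProfile (P := P) h lam.parts_sum
  have hsum : (profileMultiset s N (exponentProfile P lam.parts)).sum = N := by
    rw [hprofile, lam.parts_sum]
  exact Nat.Partition.ext (by rw [parts_partitionOfProfile hsum, hprofile])

end ExponentProfile

lemma isHaldaneAdmissible_of_haldaneWeight_ne_zero {q r P N : ℕ} {lam : N.Partition}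
    (h : haldaneWeight q r P N lam ≠ 0) : IsHaldaneAdmissible (r - q) P lam.parts := by
  rw [haldaneWeight] at h
  split_ifs at h with hparts
  · refine ⟨fun a ha => mem_Icc.mpr ⟨lam.parts_pos ha, hparts a ha⟩,
      not_lt.mp fun hlt => h ?_⟩
    rw [Nat.choose_eq_zero_of_lt hlt]
    simp
  · exact absurd rfl h

lemma haldaneWeight_mul_multiFactor {q r P N : ℕ} (lam : N.Partition)
    (h : IsHaldaneAdmissible (r - q) P lam.parts) :
    haldaneWeight q r P N lam * multiFactor N lam =
      (Nat.multinomial (range (r - q + 1)) (exponentProfile P lam.parts) *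
        ∏ j ∈ range (r - q + 1), (r - q).choose j ^ exponentProfile P lam.parts j : ℕ) := by
  obtain ⟨hparts, hm⟩ := h
  rw [haldaneWeight, if_pos fun i hi => (mem_Icc.mp (hparts i hi)).2, multiFactor]
  set s := r - q
  set μ := lam.parts
  set D := ∏ j ∈ Icc 1 s, (μ.count (j + 1)).factorial
  have hk : ∀ j ∈ Icc 1 s, exponentProfile P μ j = μ.count (j + 1) :=
    fun j hj => exponentProfile_of_mem_Icc hj
  have hprod : ∏ j ∈ range (s + 1), (s.choose j : ℚ) ^ μ.count (j + 1) =
      ∏ j ∈ range (s + 1), (s.choose j : ℚ) ^ exponentProfile P μ j := by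
    rw [range_add_one_eq_insert_Icc, prod_insert (by simp), prod_insert (by simp),
      prod_congr rfl fun j hj => by rw [← hk j hj]]
    simp
  have hfact : ∏ i ∈ Icc 1 N, (μ.count i).factorial = (μ.count 1).factorial * D := by
    rw [prod_Icc_factorial_count_eq hparts lam.parts_sum, range_add_one_eq_insert_Icc,
      prod_insert (by simp)]
  have hmult : (Nat.multinomial (range (s + 1)) (exponentProfile P μ) : ℚ) =
      P.factorial / ((P - (Multiset.card μ - μ.count 1)).factorial * D) := by
    have hspec := Nat.multinomial_spec (range (s + 1)) (exponentProfile P μ)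
    rw [(mem_piAntidiag.mp (exponentProfile_mem_piAntidiag ⟨hparts, hm⟩)).1,
      range_add_one_eq_insert_Icc, prod_insert (by simp), prod_congr rfl fun j hj => by
        rw [hk j hj], exponentProfile, if_pos rfl, ← range_add_one_eq_insert_Icc] at hspec
    rw [eq_div_iff (by positivity), ← hspec, Nat.cast_mul, Nat.cast_mul]
    ring
  push_cast
  rw [hprod, hmult, ← Nat.cast_prod, hfact, Nat.cast_choose ℚ hm,
    Nat.cast_choose ℚ (Multiset.count_le_card 1 μ)]
  push_cast
  field_simp

lemma card_mul_haldaneWeight_mul_multiFactor_mul_choose_s4 {q r P L n : ℕ}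
    (lam : (n + 1).Partition) (h : IsHaldaneAdmissible (r - q) P lam.parts) :
    (Multiset.card lam.parts : ℚ) * (haldaneWeight q r P (n + 1) lam * multiFactor (n + 1) lam *
        ((L + 1).choose (Multiset.card lam.parts) : ℚ)) =
      (L + 1) * ((Nat.multinomial (range (r - q + 1)) (exponentProfile P lam.parts) *
        (∏ j ∈ range (r - q + 1), (r - q).choose j ^ exponentProfile P lam.parts j) *
          L.choose (n - ∑ j ∈ range (r - q + 1), j * exponentProfile P lam.parts j) : ℕ) :
        ℚ) := by
  set s := r - q
  set l := Multiset.card lam.parts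
  have ht : ∑ j ∈ range (s + 1), j * exponentProfile P lam.parts j =
      ∑ j ∈ range (s + 1), j * lam.parts.count (j + 1) := by
    rw [range_add_one_eq_insert_Icc, sum_insert (by simp), sum_insert (by simp),
      sum_congr rfl fun j hj => by rw [exponentProfile_of_mem_Icc hj], zero_mul, zero_mul]
  have hN := lam.parts_sum
  rw [sum_eq_card_add_sum_range_mul_count_succ h.1] at hN
  have hl : 0 < l := Multiset.card_pos.mpr fun h0 => by
    have := lam.parts_sum
    rw [h0, Multiset.sum_zero] at this
    omega
  have hchoose : l * (L + 1).choose l =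
      (L + 1) * L.choose (n - ∑ j ∈ range (s + 1), j * exponentProfile P lam.parts j) := by
    rw [mul_choose_eq_mul_choose_pred hl, ht,
      show l - 1 = n - ∑ j ∈ range (s + 1), j * lam.parts.count (j + 1) by omega]
  rw [show ∀ w m c : ℚ, l * (w * m * c) = w * m * (l * c) by intros; ring,
    haldaneWeight_mul_multiFactor lam h, ← Nat.cast_mul, hchoose]
  push_cast
  ring

lemma sum_card_mul_haldaneWeight_mul_multiFactor (q r P L : ℕ) (hq : 1 ≤ q) (hqr : q ≤ r) :
    ∑ lam : (r * P + 1).Partition, (Multiset.card lam.parts : ℚ) *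
      (haldaneWeight q r P (r * P + 1) lam * multiFactor (r * P + 1) lam *
        ((L + 1).choose (Multiset.card lam.parts) : ℚ)) =
      (L + 1) * (((r - q) * P + L).choose (r * P) : ℚ) := by
  classical
  have hsN : (r - q + 1) * P ≤ r * P + 1 := by
    have : r - q + 1 ≤ r := by omega
    nlinarith
  rw [← sum_filter_of_ne (p := fun lam => IsHaldaneAdmissible (r - q) P lam.parts)
      fun lam _ hne => isHaldaneAdmissible_of_haldaneWeight_ne_zero fun h0 => hne (by simp [h0]),
    ← sum_piAntidiag_multinomial_mul_choose (r - q) P L (r * P)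
      (Nat.mul_le_mul_right _ (Nat.sub_le r q)),
    Nat.cast_sum, mul_sum]
  exact sum_nbij' (fun lam => exponentProfile P lam.parts) (partitionOfProfile (r - q) _)
    (fun lam hlam => exponentProfile_mem_piAntidiag (mem_filter.mp hlam).2)
    (fun k hk => mem_filter.mpr ⟨mem_univ _, isHaldaneAdmissible_partitionOfProfile hk hsN⟩)
    (fun lam hlam => partitionOfProfile_exponentProfile lam (mem_filter.mp hlam).2.1)
    (fun k hk => exponentProfile_partitionOfProfile hk hsN)
    (fun lam hlam => card_mul_haldaneWeight_mul_multiFactor_mul_choose_s4 lam (mem_filter.mp hlam).2)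

lemma sum_card_mul_haldaneProb (q r P K : ℕ) (hq : 1 ≤ q) (hqr : q ≤ r) (hK : q * P < K) :
    ∑ lam : (r * P + 1).Partition,
        (Multiset.card lam.parts : ℚ) * haldaneProb q r P K (r * P + 1) lam =
      K * (r * P + 1) / (K + (r - q : ℕ) * P) := by
  obtain ⟨L, rfl⟩ : ∃ L, K = L + 1 := Nat.exists_eq_add_one.mpr (by omega)
  simp only [haldaneProb, mul_div_assoc', ← sum_div]
  rw [sum_card_mul_haldaneWeight_mul_multiFactor q r P L hq hqr]
  set s := r - q
  have hchoose := Nat.add_one_mul_choose_eq (s * P + L) (r * P)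
  rw [show s * P + L + 1 = L + 1 + s * P by ring] at hchoose
  have hpos : 0 < (L + 1 + s * P).choose (r * P + 1) := Nat.choose_pos <| by
    have : r = s + q := by omega
    nlinarith
  rw [div_eq_div_iff (by positivity) (by positivity)]
  have := congrArg (Nat.cast : ℕ → ℚ) hchoose
  push_cast at this ⊢
  linear_combination (L + 1 : ℚ) * this

section Asymptotics

open Filter Topology

variable {K P : ℕ → ℕ} {ρ : ℝ}

lemma eventually_mul_lt_of_tendsto_div {q : ℕ} (hq : 0 < q) (hK : Tendsto K atTop atTop)
    (hPK : Tendsto (fun n => (P n : ℝ) / K n) atTop (𝓝 ρ)) (hρ : ρ < 1 / q) :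
    ∀ᶠ n in atTop, q * P n < K n := by
  filter_upwards [hPK.eventually (gt_mem_nhds hρ), hK.eventually_gt_atTop 0] with n hn hKn
  rw [div_lt_div_iff₀ (by exact_mod_cast hKn) (by exact_mod_cast hq), one_mul] at hn
  exact_mod_cast (mul_comm (P n : ℝ) q) ▸ hn

lemma tendsto_affine_div_of_tendsto_div (a c : ℝ) (hK : Tendsto K atTop atTop)
    (hPK : Tendsto (fun n => (P n : ℝ) / K n) atTop (𝓝 ρ)) (hρ : 1 + c * ρ ≠ 0) :
    Tendsto (fun n => (a * P n + 1) / (K n + c * P n)) atTop (𝓝 (a * ρ / (1 + c * ρ))) := by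
  have hinv : Tendsto (fun n => (K n : ℝ)⁻¹) atTop (𝓝 0) :=
    (tendsto_natCast_atTop_atTop.comp hK).inv_tendsto_atTop
  have hlim := ((hPK.const_mul a).add hinv).div (tendsto_const_nhds.add (hPK.const_mul c)) hρ
  rw [add_zero] at hlim
  refine hlim.congr' ?_
  filter_upwards [hK.eventually_gt_atTop 0] with n hn
  have hKn : (K n : ℝ) ≠ 0 := by exact_mod_cast hn.ne'
  simp only [Pi.div_apply]
  rw [show a * (P n / K n) + (K n : ℝ)⁻¹ = (a * P n + 1) / K n by field_simp,
    show 1 + c * (P n / K n) = (K n + c * P n) / K n by field_simp, div_div_div_cancel_right₀ hKn]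

end Asymptotics

theorem stmt4_general (q r : ℕ) (hq : 1 ≤ q) (hqr : q ≤ r)
    (ρ : ℝ) (hρ0 : 0 < ρ) (hρ1 : ρ < 1 / q)
    (K P : ℕ → ℕ)
    (hK : Filter.Tendsto K Filter.atTop Filter.atTop)
    (hPK : Filter.Tendsto (fun n => (P n : ℝ) / (K n : ℝ)) Filter.atTop (nhds ρ)) :
    Filter.Tendsto
      (fun n => (1 / (K n : ℝ)) *
        ∑ lam : Nat.Partition (r * P n + 1),
          (Multiset.card lam.parts : ℝ) *
            ((haldaneProb q r (P n) (K n) (r * P n + 1) lam : ℚ) : ℝ))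
      Filter.atTop
      (nhds ((r : ℝ) * ρ / (1 + ((r : ℝ) - (q : ℝ)) * ρ))) := by
  have hsub : ((r - q : ℕ) : ℝ) = r - q := Nat.cast_sub hqr
  have hρ : 1 + ((r : ℝ) - q) * ρ ≠ 0 := by
    have : (q : ℝ) ≤ r := by exact_mod_cast hqr
    nlinarith
  refine (tendsto_affine_div_of_tendsto_div r (r - q) hK hPK hρ).congr' ?_
  filter_upwards [eventually_mul_lt_of_tendsto_div hq hK hPK hρ1] with n hn
  have hmean :=
    congrArg (Rat.cast : ℚ → ℝ) (sum_card_mul_haldaneProb q r (P n) (K n) hq hqr hn)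
  push_cast [hsub] at hmean
  rw [hmean]
  have : (K n : ℝ) ≠ 0 := by exact_mod_cast (Nat.zero_le _).trans_lt hn |>.ne'
  field_simp

/-- For coprime `q ≤ r` and `0 < ρ < 1/q`, for all sequences of positive
integers `(Kₙ)`, `(Pₙ)` with `Kₙ → ∞` and `Pₙ/Kₙ → ρ`, setting `Nₙ = r·Pₙ + 1`, the
normalized mean number of occupied states under the Haldane measure with parameters
`(Kₙ, Nₙ)` converges to `rρ / (1 + (r−q)ρ)`. -/
theorem stmt4 (q r : ℕ) (hq : 1 ≤ q) (hqr : q ≤ r) (hcop : Nat.Coprime q r)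
    (ρ : ℝ) (hρ0 : 0 < ρ) (hρ1 : ρ < 1 / q)
    (K P : ℕ → ℕ) (hKpos : ∀ n, 0 < K n) (hPpos : ∀ n, 0 < P n)
    (hK : Filter.Tendsto K Filter.atTop Filter.atTop)
    (hPK : Filter.Tendsto (fun n => (P n : ℝ) / (K n : ℝ)) Filter.atTop (nhds ρ)) :
    Filter.Tendsto
      (fun n => (1 / (K n : ℝ)) *
        ∑ lam : Nat.Partition (r * P n + 1),
          (Multiset.card lam.parts : ℝ) *
            ((haldaneProb q r (P n) (K n) (r * P n + 1) lam : ℚ) : ℝ))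
      Filter.atTop
      (nhds ((r : ℝ) * ρ / (1 + ((r : ℝ) - (q : ℝ)) * ρ))) :=
  stmt4_general q r hq hqr ρ hρ0 hρ1 K P hK hPK
end
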